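/- Let A be a skew shape and let rects_{k,l}(A) denote the number of k × l rectangular subdiagrams contained inside A. Then for all k, l ≥ 1, rects_{k,l}(A) = Σ_{l' ≥ l} (rows_k(A)^t)_{l'} = Σ_{k' ≥ k} (cols_l(A)^t)_{k'}. Equivalently, rects_{k,l}(A) equals the number of boxes weakly to the right of column l in the Young diagram of the partition rows_k(A). Consequently, any one of the three arrays of data (rows_k(A))_{k≥1}, (cols_l(A))_{l≥1}, (rects_{k,l}(A))_{k,l≥1} on A determines the other two uniquely. -/

import Mathlib

open Finset

/-- The weakly decreasing rearrangement of a finite sequence (list) of natural numbers,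
i.e. the partition obtained by sorting its parts into weakly decreasing order. -/
def sortDesc (l : List ℕ) : List ℕ := l.mergeSort (fun a b => b ≤ a)

/-- The (extended) dominance order on partitions, represented as weakly decreasing lists
of natural numbers (parts beyond the length of the list are taken to be `0`):
`Dom a b` means `a ⊴ b`, i.e. `a₁ + ⋯ + a_k ≤ b₁ + ⋯ + b_k` for all `k`. -/
def Dom (a b : List ℕ) : Prop := ∀ k : ℕ, (a.take k).sum ≤ (b.take k).sum

/-- The conjugate (transpose) of a partition given as a list of natural numbers:
the `j`-th entry (0-indexed) is the number of parts that are `> j`. -/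
def conj (l : List ℕ) : List ℕ :=
  (List.range (l.foldr max 0)).map (fun j => (l.filter (fun x => j < x)).length)

/-- A skew shape `λ/μ`: a pair of Young diagrams `μ ⊆ λ`. -/
structure SkewShape where
  outer : YoungDiagram
  inner : YoungDiagram
  le : inner ≤ outer

namespace SkewShape

/-- The cells (boxes) of a skew shape: boxes of the outer diagram not in the inner one. -/
def cells (A : SkewShape) : Finset (ℕ × ℕ) := A.outer.cells \ A.inner.cells

/-- The number of rows of (the outer shape of) a skew shape. -/
def numRows (A : SkewShape) : ℕ := A.outer.colLen 0

/-- The number of columns of (the outer shape of) a skew shape. -/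
def numCols (A : SkewShape) : ℕ := A.outer.rowLen 0

/-- `A.overlap k i` is the number of columns occupied in common by the `k` consecutive
rows `i, i+1, …, i+k-1` of the skew shape `A` (rows indexed from 0). -/
def overlap (A : SkewShape) (k i : ℕ) : ℕ :=
  ((Finset.range A.numCols).filter (fun j => ∀ t, t < k → (i + t, j) ∈ A.cells)).card

/-- `rows_k(A)`: the weakly decreasing rearrangement of the row-overlap numbers
`(overlap k 0, overlap k 1, …)`; zero parts are discarded (a partition is identified
with its zero-padded versions).  `A.rowsK 1` is the partition of row lengths of `A`. -/
def rowsK (A : SkewShape) (k : ℕ) : List ℕ :=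
  sortDesc (((List.range (A.numRows + 1 - k)).map (A.overlap k)).filter (fun x => 0 < x))

/-- The transpose (conjugate) of a skew shape. -/
def transpose (A : SkewShape) : SkewShape :=
  ⟨A.outer.transpose, A.inner.transpose, YoungDiagram.transpose_mono A.le⟩

/-- `cols_l(A)`: the weakly decreasing rearrangement of the column-overlap numbers of `A`;
`A.colsK 1` is the partition of column lengths of `A`. -/
def colsK (A : SkewShape) (l : ℕ) : List ℕ := A.transpose.rowsK l

/-- `rects k l A` is the number of `k × l` rectangular subdiagrams (contiguous `k × l`
blocks of boxes) contained inside the skew shape `A`, recorded by the position of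
their top-left corner. -/
def rects (A : SkewShape) (k l : ℕ) : ℕ :=
  (((Finset.range A.numRows) ×ˢ (Finset.range A.numCols)).filter
    (fun p => ∀ t, t < k → ∀ u, u < l → (p.1 + t, p.2 + u) ∈ A.cells)).card

end SkewShape

/-- A semistandard Young tableau of skew shape `A`: a filling of the boxes of `A`
with positive integers, weakly increasing along rows and strictly increasing down
columns (entries outside `A` are recorded as `0`). -/
structure SkewSsyt (A : SkewShape) where
  entry : ℕ → ℕ → ℕ
  pos : ∀ i j, (i, j) ∈ A.cells → 1 ≤ entry i j
  zeros : ∀ i j, (i, j) ∉ A.cells → entry i j = 0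
  row_weak : ∀ i j1 j2, j1 ≤ j2 → (i, j1) ∈ A.cells → (i, j2) ∈ A.cells →
      entry i j1 ≤ entry i j2
  col_strict : ∀ i1 i2 j, i1 < i2 → (i1, j) ∈ A.cells → (i2, j) ∈ A.cells →
      entry i1 j < entry i2 j

/-- The number of boxes of `T` filled with the entry `v`. -/
def contentCount {A : SkewShape} (T : SkewSsyt A) (v : ℕ) : ℕ :=
  (A.cells.filter (fun c => T.entry c.1 c.2 = v)).card

/-- `T` has content `ν` (a partition written as a list, 0-indexed: `ν.getD v 0` is the
`(v+1)`-st part): the number of entries equal to `v + 1` is the `(v+1)`-st part of `ν`. -/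
def HasContent {A : SkewShape} (T : SkewSsyt A) (ν : List ℕ) : Prop :=
  ∀ v : ℕ, contentCount T (v + 1) = ν.getD v 0

/-- `readBefore c c'` : the box `c` comes strictly before the box `c'` in the reverse
reading order (rows top to bottom, each row read right to left). -/
def readBefore (c c' : ℕ × ℕ) : Prop := c.1 < c'.1 ∨ (c.1 = c'.1 ∧ c'.2 < c.2)

instance (c c' : ℕ × ℕ) : Decidable (readBefore c c') := by
  unfold readBefore; infer_instance

/-- `T` is a Littlewood–Richardson filling: its reverse reading word is a lattice word,
i.e. at every box `c` carrying an entry `v + 2`, the number of occurrences of `v + 2`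
read so far (weakly up to `c`) is at most the number of occurrences of `v + 1` read
strictly before `c`. -/
def IsLR {A : SkewShape} (T : SkewSsyt A) : Prop :=
  ∀ c ∈ A.cells, ∀ v : ℕ, T.entry c.1 c.2 = v + 2 →
    (A.cells.filter (fun c' => T.entry c'.1 c'.2 = v + 2 ∧ (readBefore c' c ∨ c' = c))).card ≤
    (A.cells.filter (fun c' => T.entry c'.1 c'.2 = v + 1 ∧ readBefore c' c)).card

/-- The support of the skew Schur function `s_A`: by the Littlewood–Richardson rule,
the set of partitions `ν` (weakly decreasing lists) admitting an LR filling of `A`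
of content `ν`, i.e. those `ν` with `s_ν` appearing with nonzero coefficient in `s_A`. -/
def SkewShape.support (A : SkewShape) : Set (List ℕ) :=
  { ν | ν.Pairwise (· ≥ ·) ∧ ∃ T : SkewSsyt A, IsLR T ∧ HasContent T ν }

/-- The coefficient of the Schur function `s_ν` in the Schur expansion of `s_A`:
by the Littlewood–Richardson rule, the number of LR fillings of `A` of content `ν`. -/
noncomputable def lrCoeff (A : SkewShape) (ν : List ℕ) : ℕ :=
  Nat.card { T : SkewSsyt A // IsLR T ∧ HasContent T ν }

/-- `s_A − s_B` is Schur-positive: every coefficient in the Schur expansion of the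
difference is nonnegative, i.e. (by the LR rule) each LR coefficient of `B` is at most
the corresponding one of `A`. -/
def SchurPositiveDiff (A B : SkewShape) : Prop :=
  ∀ ν : List ℕ, ν.Pairwise (· ≥ ·) → lrCoeff B ν ≤ lrCoeff A ν

/-- The skew Schur function `s_A = Σ_T x^T`, as a formal power series in the variables
`x_0, x_1, x_2, …` (variable `x_v` recording entries equal to `v + 1`): the coefficient
of the monomial with exponents `d` is the number of SSYT of shape `A` and content `d`. -/
noncomputable def skewSchur (A : SkewShape) : MvPowerSeries ℕ ℤ :=
  fun d => (Nat.card { T : SkewSsyt A // ∀ v : ℕ, contentCount T (v + 1) = d v } : ℤ)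

/-- The boxes remaining after deleting the top box of every non-empty column of `A`:
a box survives iff there is a box of `A` directly above it. -/
def trimCells (A : SkewShape) : Finset (ℕ × ℕ) :=
  A.cells.filter (fun c => 1 ≤ c.1 ∧ (c.1 - 1, c.2) ∈ A.cells)

/-- The set of boxes of the skew shape `A ∗ B`, obtained by positioning `B` immediately
below and to the left of `A` so that `A` and `B` share no common row or column. -/
def starCells (A B : SkewShape) : Finset (ℕ × ℕ) :=
  A.cells.image (fun c => (c.1, c.2 + B.numCols)) ∪
    B.cells.image (fun c => (c.1 + A.numRows, c.2))

/-- The straight shape (partition) `μ`, viewed as the skew shape `μ/(0)`. -/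
def ofYD (μ : YoungDiagram) : SkewShape := ⟨μ, ⊥, bot_le⟩

/-- The list of parts `(μ_k, μ_{k+1}, …, μ_l)` (1-indexed) of a partition `μ` given as a
Young diagram, parts beyond the length of `μ` being `0`. -/
def tailParts (μ : YoungDiagram) (k l : ℕ) : List ℕ :=
  (List.range (l + 1 - k)).map (fun t => μ.rowLen (k - 1 + t))

/-!
Each row of a skew shape is an interval, and both of its endpoints move weakly left going
down; hence a `k × l` block lies in `A` iff its top-left and bottom-right boxes do, and the
`k × l` blocks with top row `i` are counted by `overlap_k(i) - (l - 1)`. Summing over `i`,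
`rects_{k,l}(A) = Σ_{p ∈ rows_k(A)} (p - (l - 1))`, the number of boxes of `rows_k(A)` in
columns `≥ l`, i.e. the tail sum of its conjugate; transposing `A` gives the column version.
Since `rects` is invariant under transposition (with `k` and `l` swapped) and determines each
`rows_k(A)`, all three arrays determine one another.
-/

lemma sum_Ico_countP_lt {m : List ℕ} {M : ℕ} (hM : ∀ p ∈ m, p ≤ M) (j : ℕ) :
    ∑ t ∈ Ico j M, m.countP (fun p => t < p) = (m.map (· - j)).sum := by
  induction m with
  | nil => simp
  | cons a m ih =>
    have hIco : (Ico j M).filter (· < a) = Ico j a := by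
      ext t
      have := hM a (by simp)
      simp only [mem_filter, mem_Ico]
      omega
    simp only [List.countP_cons, decide_eq_true_eq, sum_add_distrib, List.map_cons,
      List.sum_cons, ih (fun p hp => hM p (by simp [hp]))]
    rw [sum_boole, hIco, Nat.cast_id, Nat.card_Ico, add_comm]

lemma sum_drop_conj (m : List ℕ) (j : ℕ) : ((conj m).drop j).sum = (m.map (· - j)).sum := by
  have hM : ∀ p ∈ m, p ≤ m.foldr max 0 := by
    induction m <;> simp_all
  rw [← sum_Ico_countP_lt hM, conj, ← List.map_drop, List.range_eq_range', List.drop_range']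
  simp only [← List.countP_eq_length_filter, zero_add, mul_one, Nat.Ico_eq_range']
  rfl

lemma sum_map_tsub_eq_add_countP (m : List ℕ) (j : ℕ) :
    (m.map (· - j)).sum = (m.map (· - (j + 1))).sum + m.countP (fun p => j < p) := by
  induction m with
  | nil => simp
  | cons a m ih =>
    simp only [List.map_cons, List.sum_cons, List.countP_cons, ih, decide_eq_true_eq]
    split_ifs <;> omega

lemma countP_lt_eq_add_count (m : List ℕ) (j : ℕ) :
    m.countP (fun p => j < p) = m.countP (fun p => j + 1 < p) + m.count (j + 1) := by
  induction m with
  | nil => simp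
  | cons a m ih =>
    simp only [List.countP_cons, List.count_cons, ih, decide_eq_true_eq, beq_iff_eq]
    split_ifs <;> omega

/-- Differencing `j ↦ Σ (p - j)` twice recovers the multiplicity of every part. -/
lemma eq_of_sum_map_tsub_eq {s t : List ℕ} (hs : s.Pairwise (· ≥ ·)) (ht : t.Pairwise (· ≥ ·))
    (hs₀ : 0 ∉ s) (ht₀ : 0 ∉ t)
    (h : ∀ j, (s.map (· - j)).sum = (t.map (· - j)).sum) : s = t := by
  have hcountP (j : ℕ) : s.countP (fun p => j < p) = t.countP (fun p => j < p) := by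
    have := h j
    rw [sum_map_tsub_eq_add_countP s j, sum_map_tsub_eq_add_countP t j, h (j + 1)] at this
    omega
  have hcount (v : ℕ) : s.count v = t.count v := by
    cases v with
    | zero => rw [List.count_eq_zero.2 hs₀, List.count_eq_zero.2 ht₀]
    | succ v =>
      have := hcountP v
      rw [countP_lt_eq_add_count s v, countP_lt_eq_add_count t v, hcountP (v + 1)] at this
      omega
  exact List.Perm.eq_of_pairwise (fun a b _ _ hab hba => le_antisymm hba hab) hs ht
    (List.perm_iff_count.2 hcount)

lemma pairwise_sortDesc (l : List ℕ) : (sortDesc l).Pairwise (· ≥ ·) := by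
  simpa [sortDesc] using List.pairwise_mergeSort (le := fun a b : ℕ => decide (b ≤ a))
    (fun a b c hab hbc => by simp only [decide_eq_true_eq] at *; omega)
    (fun a b => by simpa using le_total b a) l

lemma sortDesc_perm (l : List ℕ) : (sortDesc l).Perm l := List.mergeSort_perm l _

namespace SkewShape

variable (A : SkewShape)

lemma mem_cells_iff {i j : ℕ} :
    (i, j) ∈ A.cells ↔ A.inner.rowLen i ≤ j ∧ j < A.outer.rowLen i := by
  simp [cells, YoungDiagram.mem_iff_lt_rowLen, and_comm]

lemma filter_block_mem_cells_eq_Ico {k l : ℕ} (hk : 1 ≤ k) (hl : 1 ≤ l) (i : ℕ) :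
    (range A.numCols).filter (fun j => ∀ t < k, ∀ u < l, (i + t, j + u) ∈ A.cells) =
      Ico (A.inner.rowLen i) (A.outer.rowLen (i + (k - 1)) - (l - 1)) := by
  ext j
  have hcols : A.outer.rowLen (i + (k - 1)) ≤ A.numCols :=
    A.outer.rowLen_anti _ _ (Nat.zero_le _)
  simp only [mem_filter, mem_range, mem_Ico, mem_cells_iff]
  constructor
  · rintro ⟨-, h⟩
    have htop := h 0 hk 0 hl
    have hbot := h (k - 1) (by omega) (l - 1) (by omega)
    simp only [add_zero] at htop
    omega
  · rintro ⟨hj, hj'⟩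
    refine ⟨by omega, fun t ht u hu => ⟨?_, ?_⟩⟩
    · have := A.inner.rowLen_anti i (i + t) (by omega)
      omega
    · have := A.outer.rowLen_anti (i + t) (i + (k - 1)) (by omega)
      omega

lemma overlap_eq {k : ℕ} (hk : 1 ≤ k) (i : ℕ) :
    A.overlap k i = A.outer.rowLen (i + (k - 1)) - A.inner.rowLen i := by
  simpa [overlap] using congrArg card (A.filter_block_mem_cells_eq_Ico hk le_rfl i)

lemma overlap_eq_zero {k i : ℕ} (hk : 1 ≤ k) (hi : A.numRows + 1 - k ≤ i) :
    A.overlap k i = 0 := by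
  have : A.outer.rowLen (i + (k - 1)) = 0 := by
    by_contra h
    have := YoungDiagram.mem_iff_lt_colLen.1
      (YoungDiagram.mem_iff_lt_rowLen.2 (Nat.pos_of_ne_zero h))
    rw [numRows] at hi
    omega
  rw [A.overlap_eq hk, this, zero_tsub]

lemma rects_eq_sum_overlap {k l : ℕ} (hk : 1 ≤ k) (hl : 1 ≤ l) :
    A.rects k l = ∑ i ∈ range A.numRows, (A.overlap k i - (l - 1)) := by
  rw [rects, card_filter, sum_product]
  refine sum_congr rfl fun i _ => ?_
  rw [← card_filter, A.filter_block_mem_cells_eq_Ico hk hl, Nat.card_Ico, A.overlap_eq hk]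
  omega

lemma zero_notMem_rowsK (k : ℕ) : 0 ∉ A.rowsK k := by
  simp [rowsK, (sortDesc_perm _).mem_iff]

lemma rects_eq_sum_rowsK {k l : ℕ} (hk : 1 ≤ k) (hl : 1 ≤ l) :
    A.rects k l = ((A.rowsK k).map (· - (l - 1))).sum := by
  have hzero (s : List ℕ) :
      ((s.filter (0 < ·)).map (· - (l - 1))).sum = (s.map (· - (l - 1))).sum := by
    rw [← List.sum_map_filter_add_sum_map_filter_not (0 < ·) _ s]
    simp +contextual [List.sum_eq_zero_iff]
  rw [rowsK, ((sortDesc_perm _).map _).sum_eq, hzero, List.map_map, A.rects_eq_sum_overlap hk hl]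
  change _ = ∑ i ∈ range (A.numRows + 1 - k), (A.overlap k i - (l - 1))
  refine (sum_subset (range_subset_range.2 (by omega)) fun i _ hi => ?_).symm
  rw [A.overlap_eq_zero hk (by simpa using hi), zero_tsub]

lemma rowsK_eq_iff_rects_eq (B : SkewShape) :
    (∀ k, 1 ≤ k → A.rowsK k = B.rowsK k) ↔
      ∀ k l, 1 ≤ k → 1 ≤ l → A.rects k l = B.rects k l := by
  refine ⟨fun h k l hk hl => ?_, fun h k hk => ?_⟩
  · rw [A.rects_eq_sum_rowsK hk hl, B.rects_eq_sum_rowsK hk hl, h k hk]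
  · refine eq_of_sum_map_tsub_eq (pairwise_sortDesc _) (pairwise_sortDesc _)
      (A.zero_notMem_rowsK k) (B.zero_notMem_rowsK k) fun j => ?_
    simpa [A.rects_eq_sum_rowsK hk (Nat.le_add_left 1 j),
      B.rects_eq_sum_rowsK hk (Nat.le_add_left 1 j)] using h k (j + 1) hk (Nat.le_add_left 1 j)

lemma mem_transpose_cells {c : ℕ × ℕ} : c ∈ A.transpose.cells ↔ c.swap ∈ A.cells := by
  simp [cells, transpose, YoungDiagram.mem_cells, YoungDiagram.mem_transpose]

lemma rects_transpose (k l : ℕ) : A.transpose.rects l k = A.rects k l := by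
  have hrows : A.transpose.numRows = A.numCols := by
    simp [numRows, numCols, transpose, YoungDiagram.colLen_transpose]
  have hcols : A.transpose.numCols = A.numRows := by
    simp [numRows, numCols, transpose, YoungDiagram.rowLen_transpose]
  refine card_nbij' Prod.swap Prod.swap ?_ ?_ (fun _ _ => rfl) (fun _ _ => rfl) <;>
  · rintro ⟨i, j⟩
    simp only [coe_filter, Set.mem_ofPred_eq, mem_product, mem_range, hrows, hcols,
      mem_transpose_cells, Prod.swap_prod_mk]
    exact fun ⟨⟨hi, hj⟩, h⟩ => ⟨⟨hj, hi⟩, fun t ht u hu => h u hu t ht⟩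

lemma colsK_eq_iff_rects_eq (B : SkewShape) :
    (∀ l, 1 ≤ l → A.colsK l = B.colsK l) ↔
      ∀ k l, 1 ≤ k → 1 ≤ l → A.rects k l = B.rects k l := by
  simp only [colsK, rowsK_eq_iff_rects_eq, rects_transpose]
  exact ⟨fun h k l hk hl => h l k hl hk, fun h l k hl hk => h k l hk hl⟩

end SkewShape

/-- Proposition relating `rows_k`, `cols_l` and `rects_{k,l}`.
For any skew shape `A` and all `k, l ≥ 1`,
`rects_{k,l}(A) = Σ_{l' ≥ l} (rows_k(A)ᵗ)_{l'} = Σ_{k' ≥ k} (cols_l(A)ᵗ)_{k'}`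
(the first sum being the number of boxes weakly to the right of column `l` in the
Young diagram of `rows_k(A)`).  Consequently, any one of the three arrays of data
`(rows_k(A))_{k≥1}`, `(cols_l(A))_{l≥1}`, `(rects_{k,l}(A))_{k,l≥1}` determines the
other two uniquely. -/
theorem rects_eq_sums_and_determination (A B : SkewShape) :
    (∀ k l : ℕ, 1 ≤ k → 1 ≤ l →
      A.rects k l = ((conj (A.rowsK k)).drop (l - 1)).sum ∧
      A.rects k l = ((conj (A.colsK l)).drop (k - 1)).sum) ∧
    ((∀ k, 1 ≤ k → A.rowsK k = B.rowsK k) ↔ (∀ l, 1 ≤ l → A.colsK l = B.colsK l)) ∧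
    ((∀ k, 1 ≤ k → A.rowsK k = B.rowsK k) ↔
      (∀ k l, 1 ≤ k → 1 ≤ l → A.rects k l = B.rects k l)) := by
  refine ⟨fun k l hk hl => ⟨?_, ?_⟩,
    (A.rowsK_eq_iff_rects_eq B).trans (A.colsK_eq_iff_rects_eq B).symm,
    A.rowsK_eq_iff_rects_eq B⟩
  · rw [A.rects_eq_sum_rowsK hk hl, sum_drop_conj]
  · rw [← A.rects_transpose, A.transpose.rects_eq_sum_rowsK hl hk, sum_drop_conj]
    rfl
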